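/- Let T be a tree and let D ⊆ L(T) be a set of legs of T with #D even. Then there exists exactly one cycle C in T whose set of legs is D (that is, L(T) ∩ C = D). -/

import Mathlib

/-
Work with chains mod 2. The boundary of a set of half-edges counts, at each vertex, the parity of
its tangent directions; edge chains are the `inv`-invariant sets of edge halves. By connectedness
the boundaries of edge chains contain every even set of vertices, so they span a space of
dimension at least `#V - 1`, while edge chains have dimension at most `#E`. Genus zero,
`#E - #V + 1 + Σ g = 0`, then forces all weights to vanish and the boundary to be injective on
edge chains. With weights zero a cycle is determined by its half-edges, an `inv`-closed set with
even tangent counts; splitting it into its legs `D` and an edge chain `E` gives `∂E = ∂D`.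
As `#D` is even, `∂D` is an even set of vertices, hence `∂E` for some edge chain `E`
(existence), and injectivity of the boundary makes `E` unique.
-/

namespace TropDR

open Finset

/-- `Finset.filter` with classical decidability. -/
noncomputable def cfilter {α : Type*} (p : α → Prop) (s : Finset α) : Finset α :=
  @Finset.filter α p (Classical.decPred p) s

/-- A graph with legs: a finite set `X` together with an idempotent root map `rt`
and an involution `inv` fixing every root vertex. -/
structure PGraph where
  X : Type
  [fintypeX : Fintype X]
  [decEqX : DecidableEq X]
  rt : X → X
  inv : X → X
  rt_idem : ∀ x, rt (rt x) = rt x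
  inv_invol : ∀ x, inv (inv x) = x
  inv_fix_rt : ∀ x, inv (rt x) = rt x

attribute [instance] PGraph.fintypeX PGraph.decEqX

namespace PGraph

variable (G : PGraph)

/-- Vertices are the fixed points (= the image) of the root map. -/
def IsVertex (x : G.X) : Prop := G.rt x = x

/-- Half-edges are the non-vertices. -/
def IsHalf (x : G.X) : Prop := G.rt x ≠ x

/-- Legs are the `inv`-fixed half-edges. -/
def IsLeg (x : G.X) : Prop := G.IsHalf x ∧ G.inv x = x

/-- Halves of genuine edges: half-edges moved by the involution. -/
def IsEdgeHalf (x : G.X) : Prop := G.IsHalf x ∧ G.inv x ≠ x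

noncomputable def vertexSet : Finset G.X := cfilter (fun x => G.IsVertex x) Finset.univ

noncomputable def legSet : Finset G.X := cfilter (fun x => G.IsLeg x) Finset.univ

noncomputable def edgeHalfSet : Finset G.X := cfilter (fun x => G.IsEdgeHalf x) Finset.univ

/-- Tangent directions at a vertex `v`: half-edges rooted at `v`. -/
noncomputable def tangents (v : G.X) : Finset G.X :=
  cfilter (fun h => G.IsHalf h ∧ G.rt h = v) Finset.univ

noncomputable def valence (v : G.X) : ℕ := (G.tangents v).card

/-- The number of edges: half the number of edge half-edges. -/
noncomputable def numEdges : ℕ := G.edgeHalfSet.card / 2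

noncomputable def numLegs : ℕ := G.legSet.card

noncomputable def numVertices : ℕ := G.vertexSet.card

/-- Connectedness: the equivalence relation generated by `x ∼ rt x` and `x ∼ inv x`
has a single class (and `X` is nonempty). -/
def Connected : Prop :=
  Nonempty G.X ∧ ∀ x y : G.X, Relation.EqvGen (fun a b => G.rt a = b ∨ G.inv a = b) x y

/-- A subgraph: a subset of `X` closed under the root map and the involution. -/
def IsSubgraph (F : Finset G.X) : Prop :=
  (∀ x ∈ F, G.rt x ∈ F) ∧ (∀ x ∈ F, G.inv x ∈ F)

/-- Valency of `v` inside a subgraph `F`. -/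
noncomputable def valIn (F : Finset G.X) (v : G.X) : ℕ := (G.tangents v ∩ F).card

end PGraph

/-- A morphism of graphs: commutes with the root maps and involutions,
and maps no edge into a leg. -/
structure GraphHom (G' G : PGraph) where
  toFun : G'.X → G.X
  map_rt : ∀ x, toFun (G'.rt x) = G.rt (toFun x)
  map_inv : ∀ x, toFun (G'.inv x) = G.inv (toFun x)
  edge_not_leg : ∀ h, G'.IsEdgeHalf h → ¬ G.IsLeg (toFun h)

/-- A harmonic morphism of graphs: a graph morphism together with a degree function. -/
structure HarmonicHom (G' G : PGraph) extends GraphHom G' G where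
  deg : G'.X → ℕ
  deg_edge : ∀ h, G'.IsEdgeHalf h → deg (G'.inv h) = deg h
  deg_zero_iff : ∀ h, G'.IsHalf h → (deg h = 0 ↔ G.IsVertex (toFun h))
  harmonic : ∀ v', G'.IsVertex v' → ∀ h, G.IsHalf h → G.rt h = toFun v' →
    deg v' = ∑ h' ∈ cfilter (fun h' => toFun h' = h) (G'.tangents v'), deg h'

namespace HarmonicHom

variable {G' G : PGraph} (φ : HarmonicHom G' G)

/-- A harmonic morphism is finite if it has positive degree on every half-edge. -/
def Finite : Prop := ∀ h, G'.IsHalf h → 0 < φ.deg h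

/-- The sum of the degrees over the vertex fiber of `v`. -/
noncomputable def vertexFiberDeg (v : G.X) : ℕ :=
  ∑ v' ∈ cfilter (fun v' => φ.toFun v' = v) G'.vertexSet, φ.deg v'

end HarmonicHom

/-- A weighted graph: a graph together with a genus function on (all elements;
only the values at vertices are relevant). -/
structure WGraph extends PGraph where
  gw : X → ℕ

namespace WGraph

variable (G : WGraph)

/-- The genus of a (connected) weighted graph. -/
noncomputable def genus : ℤ :=
  (G.toPGraph.numEdges : ℤ) - (G.toPGraph.numVertices : ℤ) + 1 +
    ∑ v ∈ G.toPGraph.vertexSet, (G.gw v : ℤ)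

/-- The Euler characteristic of a vertex. -/
noncomputable def chiV (v : G.X) : ℤ :=
  2 - 2 * (G.gw v : ℤ) - (G.toPGraph.valence v : ℤ)

/-- The Euler characteristic of a (connected) weighted graph. -/
noncomputable def chi : ℤ := 2 - 2 * G.genus - (G.toPGraph.numLegs : ℤ)

end WGraph

/-- The ramification degree of a (finite) harmonic morphism of weighted graphs at `v'`. -/
noncomputable def ram {G' G : WGraph} (φ : HarmonicHom G'.toPGraph G.toPGraph) (v' : G'.X) : ℤ :=
  (φ.deg v' : ℤ) * G.chiV (φ.toFun v') - G'.chiV v'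

def Unramified {G' G : WGraph} (φ : HarmonicHom G'.toPGraph G.toPGraph) : Prop :=
  ∀ v', G'.toPGraph.IsVertex v' → ram φ v' = 0

def Effective {G' G : WGraph} (φ : HarmonicHom G'.toPGraph G.toPGraph) : Prop :=
  ∀ v', G'.toPGraph.IsVertex v' → 0 ≤ ram φ v'

/-- A tree: a connected weighted graph of genus zero. -/
def IsTree (T : WGraph) : Prop := T.toPGraph.Connected ∧ T.genus = 0

/-- A hyperelliptic morphism: a finite harmonic morphism of degree two onto a tree, such
that `d_φ(v) = 2` at every vertex of positive weight. -/
def IsHyperelliptic {G T : WGraph} (φ : HarmonicHom G.toPGraph T.toPGraph) : Prop :=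
  φ.Finite ∧ IsTree T ∧ (∀ v, T.toPGraph.IsVertex v → φ.vertexFiberDeg v = 2) ∧
    (∀ v, G.toPGraph.IsVertex v → 0 < G.gw v → φ.deg v = 2)
/-- A cycle in a weighted graph `T`: a subgraph `C` such that every vertex `v` of `C` has
even valency in `C` and satisfies `χ_C(v) = 2 − 2g(v) − val_C(v) ≤ 0`. -/
def IsCycle (T : WGraph) (C : Finset T.X) : Prop :=
  T.toPGraph.IsSubgraph C ∧
    ∀ v ∈ C, T.toPGraph.IsVertex v →
      Even (T.toPGraph.valIn C v) ∧
        (2 : ℤ) - 2 * (T.gw v : ℤ) - (T.toPGraph.valIn C v : ℤ) ≤ 0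

@[simp]
lemma mem_cfilter {α : Type*} {p : α → Prop} {s : Finset α} {x : α} :
    x ∈ cfilter p s ↔ x ∈ s ∧ p x :=
  @Finset.mem_filter _ _ (Classical.decPred p) _ _

lemma zmod_two_ite_add_ite_eq_zero_iff {p q : Prop} [Decidable p] [Decidable q] :
    ((if p then 1 else 0 : ZMod 2) + if q then 1 else 0) = 0 ↔ (p ↔ q) := by
  by_cases hp : p <;> by_cases hq : q <;> simp [hp, hq]
  decide

lemma linearIndependent_single_add_single {ι R : Type*} [CommRing R] [DecidableEq ι]
    {S : Finset ι} {v₀ : ι} (hv₀ : v₀ ∉ S) :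
    LinearIndependent R (fun u : S => (Pi.single (u : ι) 1 + Pi.single v₀ 1 : ι → R)) := by
  -- restricting to `S` kills `Pi.single v₀ 1` and leaves the standard basis of `S → R`
  apply LinearIndependent.of_comp (LinearMap.funLeft R R ((↑) : S → ι))
  convert (Pi.basisFun R S).linearIndependent using 1
  ext u w
  have hw : (w : ι) ≠ v₀ := fun h => hv₀ (h ▸ w.2)
  simp only [Function.comp_apply, LinearMap.funLeft_apply, Pi.add_apply, Pi.basisFun_apply]
  rw [Pi.single_apply, Pi.single_apply, Pi.single_apply, if_neg hw, add_zero]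
  exact if_congr Subtype.ext_iff.symm rfl rfl

namespace PGraph

open Module

variable {G : PGraph}

@[simp] lemma mem_vertexSet {x : G.X} : x ∈ G.vertexSet ↔ G.IsVertex x := by
  simp [vertexSet]

@[simp] lemma mem_legSet {x : G.X} : x ∈ G.legSet ↔ G.IsLeg x := by
  simp [legSet]

@[simp] lemma mem_edgeHalfSet {x : G.X} : x ∈ G.edgeHalfSet ↔ G.IsEdgeHalf x := by
  simp [edgeHalfSet]

@[simp] lemma mem_tangents {v h : G.X} : h ∈ G.tangents v ↔ G.IsHalf h ∧ G.rt h = v := by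
  simp [tangents]

lemma isVertex_rt (x : G.X) : G.IsVertex (G.rt x) := G.rt_idem x

lemma IsVertex.inv_eq {v : G.X} (hv : G.IsVertex v) : G.inv v = v := by
  have h := G.inv_fix_rt v
  rwa [show G.rt v = v from hv] at h

lemma inv_involutive : Function.Involutive G.inv := G.inv_invol

lemma IsHalf.inv {x : G.X} (hx : G.IsHalf x) : G.IsHalf (G.inv x) := fun hv => hx <| by
  have hfix : G.inv x = x := by simpa only [G.inv_invol] using congrArg G.inv (IsVertex.inv_eq hv)
  rw [← hfix]
  exact hv

lemma isHalf_inv_iff {x : G.X} : G.IsHalf (G.inv x) ↔ G.IsHalf x :=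
  ⟨fun h => G.inv_invol x ▸ h.inv, IsHalf.inv⟩

lemma IsEdgeHalf.inv {x : G.X} (hx : G.IsEdgeHalf x) : G.IsEdgeHalf (G.inv x) :=
  ⟨hx.1.inv, fun h => hx.2 (by simpa only [G.inv_invol] using congrArg G.inv h)⟩

lemma IsHalf.isEdgeHalf_of_not_isLeg {x : G.X} (hx : G.IsHalf x) (hleg : ¬ G.IsLeg x) :
    G.IsEdgeHalf x :=
  ⟨hx, fun h => hleg ⟨hx, h⟩⟩

lemma IsSubgraph.inv_mem_iff {F : Finset G.X} (hF : G.IsSubgraph F) {x : G.X} :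
    G.inv x ∈ F ↔ x ∈ F :=
  ⟨fun h => G.inv_invol x ▸ hF.2 _ h, hF.2 x⟩

lemma not_isHalf_of_mem_image_rt {S : Finset G.X} {x : G.X} (hx : x ∈ S.image G.rt) :
    ¬ G.IsHalf x := by
  obtain ⟨a, -, rfl⟩ := mem_image.mp hx
  exact not_not.mpr (G.rt_idem a)

lemma legSet_inter_union_image_rt (S : Finset G.X) :
    G.legSet ∩ (S ∪ S.image G.rt) = G.legSet ∩ S := by
  ext x
  simp only [mem_inter, mem_union, mem_legSet]
  exact and_congr_right fun hx => or_iff_left fun h => not_isHalf_of_mem_image_rt h hx.1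

lemma valIn_union_image_rt (S : Finset G.X) (v : G.X) :
    G.valIn (S ∪ S.image G.rt) v = G.valIn S v := by
  unfold valIn
  congr 1
  ext x
  simp only [mem_inter, mem_union, mem_tangents]
  exact and_congr_right fun hx => or_iff_left fun h => not_isHalf_of_mem_image_rt h hx.1

/-- `R` contains exactly one half of every edge. -/
def IsOrientation (R : Finset G.X) : Prop := ∀ x, x ∈ R ↔ G.IsEdgeHalf x ∧ G.inv x ∉ R

lemma exists_orientation : ∃ R : Finset G.X, IsOrientation R := by
  let e := Fintype.equivFin G.X
  refine ⟨cfilter (fun x => G.IsEdgeHalf x ∧ e x < e (G.inv x)) univ, fun x => ?_⟩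
  have hne : e x ≠ e (G.inv x) → (e x < e (G.inv x) ↔ ¬ e (G.inv x) < e x) := fun h =>
    ⟨fun h' => h'.not_gt, fun h' => (le_of_not_gt h').lt_of_ne h⟩
  simp only [mem_cfilter, mem_univ, true_and, G.inv_invol, not_and]
  constructor
  · rintro ⟨hx, hlt⟩
    exact ⟨hx, fun _ => (hne hlt.ne).mp hlt⟩
  · rintro ⟨hx, hlt⟩
    exact ⟨hx, (hne (e.injective.ne hx.2.symm)).mpr (hlt hx.inv)⟩

lemma IsOrientation.card_le_numEdges {R : Finset G.X} (hR : IsOrientation R) :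
    R.card ≤ G.numEdges := by
  have hsub : R ∪ R.image G.inv ⊆ G.edgeHalfSet := by
    intro x hx
    rcases mem_union.mp hx with hx | hx
    · exact mem_edgeHalfSet.mpr ((hR x).mp hx).1
    · obtain ⟨y, hy, rfl⟩ := mem_image.mp hx
      exact mem_edgeHalfSet.mpr ((hR y).mp hy).1.inv
  have hdisj : Disjoint R (R.image G.inv) := by
    refine disjoint_left.mpr fun x hx hx' => ?_
    obtain ⟨y, hy, rfl⟩ := mem_image.mp hx'
    exact ((hR y).mp hy).2 hx
  have hcard := card_le_card hsub
  rw [card_union_of_disjoint hdisj, card_image_of_injective _ G.inv_involutive.injective] at hcard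
  unfold numEdges
  omega

noncomputable def boundary : (G.X → ZMod 2) →ₗ[ZMod 2] (G.X → ZMod 2) :=
  LinearMap.pi fun v => ∑ h ∈ G.tangents v, LinearMap.proj h

lemma boundary_apply (t : G.X → ZMod 2) (v : G.X) :
    boundary t v = ∑ h ∈ G.tangents v, t h := by
  simp [boundary]

lemma boundary_single {h : G.X} (hh : G.IsHalf h) :
    boundary (Pi.single h 1) = Pi.single (G.rt h) (1 : ZMod 2) := by
  ext v
  simp [boundary_apply, Pi.single_apply, hh, eq_comm]

/-- Mod-2 chains on the edges, as `inv`-invariant functions on the halves of edges. -/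
def edgeChains : Submodule (ZMod 2) (G.X → ZMod 2) where
  carrier := {t | ∀ x, t (G.inv x) = t x ∧ (¬ G.IsEdgeHalf x → t x = 0)}
  add_mem' {s t} hs ht x := by
    refine ⟨by simp [(hs x).1, (ht x).1], fun hx => ?_⟩
    simp [(hs x).2 hx, (ht x).2 hx]
  zero_mem' x := by simp
  smul_mem' c t ht x := by
    refine ⟨by simp [(ht x).1], fun hx => ?_⟩
    simp [(ht x).2 hx]

variable (G) in
noncomputable def edgeIndicator (x : G.X) : G.X → ZMod 2 := Pi.single x 1 + Pi.single (G.inv x) 1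

lemma edgeIndicator_mem_edgeChains {x : G.X} (hx : G.IsEdgeHalf x) :
    G.edgeIndicator x ∈ edgeChains := by
  intro y
  refine ⟨?_, fun hy => ?_⟩
  · simp only [edgeIndicator, Pi.add_apply, Pi.single_apply, G.inv_involutive.injective.eq_iff,
      G.inv_involutive.eq_iff]
    rw [add_comm]
  · have h₁ : y ≠ x := fun h => hy (h ▸ hx)
    have h₂ : y ≠ G.inv x := fun h => hy (h ▸ hx.inv)
    simp [edgeIndicator, h₁, h₂]

lemma boundary_edgeIndicator {x : G.X} (hx : G.IsHalf x) :
    boundary (G.edgeIndicator x) = Pi.single (G.rt x) 1 + Pi.single (G.rt (G.inv x)) 1 := by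
  rw [edgeIndicator, map_add, boundary_single hx, boundary_single hx.inv]

lemma IsOrientation.sum_smul_edgeIndicator {R : Finset G.X} (hR : IsOrientation R)
    {t : G.X → ZMod 2} (ht : t ∈ edgeChains) : ∑ i ∈ R, t i • G.edgeIndicator i = t := by
  ext x
  have hinv : ∀ i, x = G.inv i ↔ G.inv x = i := fun i => by
    rw [eq_comm, G.inv_involutive.eq_iff, eq_comm]
  simp only [edgeIndicator, Finset.sum_apply, Pi.smul_apply, Pi.add_apply, Pi.single_apply,
    smul_eq_mul, mul_add, mul_ite, mul_one, mul_zero, sum_add_distrib, hinv]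
  rw [sum_ite_eq, sum_ite_eq, (ht x).1]
  by_cases hx : G.IsEdgeHalf x
  · by_cases hxR : x ∈ R
    · simp [hxR, ((hR x).mp hxR).2]
    · have hxR' : G.inv x ∈ R := by_contra fun h => hxR ((hR x).mpr ⟨hx, h⟩)
      simp [hxR, hxR']
  · have hxR : x ∉ R := fun h => hx ((hR x).mp h).1
    have hxR' : G.inv x ∉ R := fun h => hx (by simpa only [G.inv_invol] using ((hR _).mp h).1.inv)
    simp [hxR, hxR', (ht x).2 hx]

lemma finrank_edgeChains_le : finrank (ZMod 2) (edgeChains (G := G)) ≤ G.numEdges := by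
  obtain ⟨R, hR⟩ := exists_orientation (G := G)
  have hle : edgeChains ≤
      Submodule.span (ZMod 2) (↑(R.image G.edgeIndicator) : Set (G.X → ZMod 2)) := by
    intro t ht
    rw [← hR.sum_smul_edgeIndicator ht]
    exact Submodule.sum_smul_mem _ _ fun i hi => Submodule.subset_span (mem_image_of_mem _ hi)
  calc finrank (ZMod 2) (edgeChains (G := G)) ≤ _ := Submodule.finrank_mono hle
    _ ≤ (R.image G.edgeIndicator).card := finrank_span_finset_le_card _
    _ ≤ R.card := card_image_le
    _ ≤ G.numEdges := hR.card_le_numEdges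

lemma Connected.single_add_single_mem (hG : G.Connected) (x y : G.X) :
    Pi.single (G.rt x) 1 + Pi.single (G.rt y) 1 ∈ edgeChains.map (boundary (G := G)) := by
  induction hG.2 x y with
  | rel a b hab =>
    rcases hab with rfl | rfl
    · rw [G.rt_idem, ZModModule.add_self]
      exact zero_mem _
    · by_cases ha : G.IsEdgeHalf a
      · rw [← boundary_edgeIndicator ha.1]
        exact Submodule.mem_map_of_mem (edgeIndicator_mem_edgeChains ha)
      · have hfix : G.inv a = a := by
          by_contra hne
          exact ha ⟨fun hv => hne (IsVertex.inv_eq hv), hne⟩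
        rw [hfix, ZModModule.add_self]
        exact zero_mem _
  | refl a => rw [ZModModule.add_self]; exact zero_mem _
  | symm a b _ ih => rwa [add_comm]
  | trans a b c _ _ ihab ihbc =>
    rw [← ZModModule.add_add_add_cancel _ (Pi.single (G.rt b) 1)]
    exact add_mem ihab ihbc

lemma Connected.numVertices_sub_one_le_finrank (hG : G.Connected) :
    G.numVertices - 1 ≤ finrank (ZMod 2) (edgeChains.map (boundary (G := G))) := by
  obtain ⟨x₀⟩ := hG.1
  set S := G.vertexSet.erase (G.rt x₀)
  have hspan : Submodule.span (ZMod 2)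
      (Set.range fun u : S => (Pi.single (u : G.X) 1 + Pi.single (G.rt x₀) 1 : G.X → ZMod 2))
        ≤ edgeChains.map boundary := by
    refine Submodule.span_le.mpr (Set.range_subset_iff.mpr fun u => ?_)
    have hu : G.rt u = u := mem_vertexSet.mp (mem_of_mem_erase u.2)
    simpa only [hu, SetLike.mem_coe] using hG.single_add_single_mem u x₀
  calc G.numVertices - 1 = Fintype.card S := by
        rw [Fintype.card_coe, card_erase_of_mem (mem_vertexSet.mpr (isVertex_rt x₀))]; rfl
    _ = _ := (finrank_span_eq_card (linearIndependent_single_add_single (notMem_erase _ _))).symm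
    _ ≤ _ := Submodule.finrank_mono hspan

lemma boundary_indicator_apply (S : Finset G.X) (v : G.X) :
    boundary ((S : Set G.X).indicator 1) v = (G.valIn S v : ZMod 2) := by
  simp only [boundary_apply, Set.indicator_apply, mem_coe, Pi.one_apply, sum_boole, valIn,
    filter_mem_eq_inter]

lemma boundary_indicator_of_forall_isHalf {S : Finset G.X} (hS : ∀ p ∈ S, G.IsHalf p) :
    boundary ((S : Set G.X).indicator 1) = ∑ p ∈ S, Pi.single (G.rt p) 1 := by
  have hind : ((S : Set G.X).indicator 1 : G.X → ZMod 2) = ∑ p ∈ S, Pi.single p 1 := by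
    ext x
    simp [Set.indicator_apply, Finset.sum_apply, Pi.single_apply]
  rw [hind, map_sum]
  exact sum_congr rfl fun p hp => boundary_single (hS p hp)

lemma Connected.boundary_indicator_mem_map (hG : G.Connected) {D : Finset G.X}
    (hD : ∀ p ∈ D, G.IsHalf p) (hEven : Even D.card) :
    boundary ((D : Set G.X).indicator 1) ∈ edgeChains.map (boundary (G := G)) := by
  obtain ⟨x₀⟩ := hG.1
  obtain ⟨k, hk⟩ := hEven
  have hsplit : ∑ p ∈ D, (Pi.single (G.rt p) 1 : G.X → ZMod 2) =
      ∑ p ∈ D, (Pi.single (G.rt p) 1 + Pi.single (G.rt x₀) 1) := by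
    rw [sum_add_distrib, sum_const, hk, add_nsmul, ZModModule.add_self, add_zero]
  rw [boundary_indicator_of_forall_isHalf hD, hsplit]
  exact sum_mem fun p _ => hG.single_add_single_mem p x₀

lemma boundary_indicator_cfilter_isHalf (S : Finset G.X) :
    boundary ((cfilter G.IsHalf S : Set G.X).indicator 1) =
      boundary ((S : Set G.X).indicator 1) := by
  have htan : ∀ v, G.tangents v ∩ cfilter G.IsHalf S = G.tangents v ∩ S := fun v => by
    ext x
    simp only [mem_inter, mem_tangents, mem_cfilter]
    tauto
  ext v
  rw [boundary_indicator_apply, boundary_indicator_apply, valIn, valIn, htan]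

lemma exists_finset_indicator_eq_of_mem_edgeChains {t : G.X → ZMod 2} (ht : t ∈ edgeChains) :
    ∃ E : Finset G.X,
      (E : Set G.X).indicator 1 = t ∧ ∀ x ∈ E, G.IsEdgeHalf x ∧ G.inv x ∈ E := by
  refine ⟨cfilter (t · ≠ 0) univ, ?_, fun x hx => ?_⟩
  · ext x
    have hval : ∀ a : ZMod 2, a ≠ 0 → a = 1 := by decide
    by_cases hx : t x = 0 <;> simp [Set.indicator_apply, hx, hval]
  · simp only [mem_cfilter, mem_univ, true_and] at hx ⊢
    exact ⟨not_not.mp (mt ((ht x).2) hx), (ht x).1 ▸ hx⟩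

end PGraph

namespace IsCycle

open PGraph

variable {T : WGraph} {C : Finset T.X}

lemma boundary_indicator_eq_zero (hC : IsCycle T C) :
    boundary ((C : Set T.X).indicator 1) = 0 := by
  ext v
  rw [boundary_indicator_apply, Pi.zero_apply]
  by_cases hv : v ∈ C ∧ T.IsVertex v
  · exact (ZMod.natCast_eq_zero_iff_even).mpr (hC.2 v hv.1 hv.2).1
  · have hempty : T.tangents v ∩ C = ∅ := by
      refine eq_empty_of_forall_notMem fun h hh => hv ?_
      obtain ⟨hht, hhC⟩ := mem_inter.mp hh
      obtain ⟨-, rfl⟩ := mem_tangents.mp hht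
      exact ⟨hC.1.1 h hhC, isVertex_rt h⟩
    rw [valIn, hempty, card_empty, Nat.cast_zero]

lemma exists_isHalf_of_gw_eq_zero (hC : IsCycle T C) {v : T.X} (hvC : v ∈ C)
    (hv : T.IsVertex v) (hgv : T.gw v = 0) : ∃ h ∈ C, T.IsHalf h ∧ T.rt h = v := by
  have hval := (hC.2 v hvC hv).2
  rw [hgv] at hval
  obtain ⟨h, hh⟩ := card_pos.mp (show 0 < T.valIn C v by omega)
  obtain ⟨hht, hhC⟩ := mem_inter.mp hh
  exact ⟨h, hhC, mem_tangents.mp hht⟩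

lemma subset_of_forall_isHalf (hg : ∀ v, T.IsVertex v → T.gw v = 0) (hC : IsCycle T C)
    {C' : Finset T.X} (hC' : T.IsSubgraph C') (hhalf : ∀ x ∈ C, T.IsHalf x → x ∈ C') :
    C ⊆ C' := by
  intro x hx
  by_cases hxh : T.IsHalf x
  · exact hhalf x hx hxh
  · have hxv : T.IsVertex x := not_not.mp hxh
    obtain ⟨h, hhC, hh, rfl⟩ := hC.exists_isHalf_of_gw_eq_zero hx hxv (hg x hxv)
    exact hC'.1 h (hhalf h hhC hh)

end IsCycle

lemma isCycle_union_image_rt {T : WGraph} (hg : ∀ v, T.IsVertex v → T.gw v = 0)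
    {S : Finset T.X} (hS : ∀ x ∈ S, T.IsHalf x) (hinv : ∀ x ∈ S, T.inv x ∈ S)
    (hbd : PGraph.boundary ((S : Set T.X).indicator 1) = 0) :
    IsCycle T (S ∪ S.image T.rt) := by
  refine ⟨⟨fun x hx => ?_, fun x hx => ?_⟩, fun v hv hvert => ?_⟩
  · rcases mem_union.mp hx with hx | hx
    · exact mem_union_right _ (mem_image_of_mem _ hx)
    · obtain ⟨a, -, rfl⟩ := mem_image.mp hx
      rwa [T.rt_idem]
  · rcases mem_union.mp hx with hx | hx
    · exact mem_union_left _ (hinv x hx)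
    · obtain ⟨a, -, rfl⟩ := mem_image.mp hx
      rwa [T.inv_fix_rt]
  · rw [PGraph.valIn_union_image_rt, hg v hvert]
    have heven : Even (T.valIn S v) := by
      rw [← ZMod.natCast_eq_zero_iff_even, ← PGraph.boundary_indicator_apply, hbd,
        Pi.zero_apply]
    have hpos : 0 < T.valIn S v := by
      rcases mem_union.mp hv with hvS | hvS
      · exact absurd hvert (hS v hvS)
      · obtain ⟨a, haS, rfl⟩ := mem_image.mp hvS
        exact card_pos.mpr
          ⟨a, mem_inter.mpr ⟨PGraph.mem_tangents.mpr ⟨hS a haS, rfl⟩, haS⟩⟩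
    obtain ⟨k, hk⟩ := heven
    refine ⟨⟨k, hk⟩, ?_⟩
    push_cast
    omega

namespace IsTree

open PGraph Module

variable {T : WGraph}

lemma sum_gw_eq_zero_and_finrank_map_boundary_eq (hT : IsTree T) :
    ∑ v ∈ T.vertexSet, (T.gw v : ℤ) = 0 ∧
      finrank (ZMod 2) ((edgeChains (G := T.toPGraph)).map boundary) =
        finrank (ZMod 2) (edgeChains (G := T.toPGraph)) := by
  have hlow := hT.1.numVertices_sub_one_le_finrank
  have hmap := Submodule.finrank_map_le (boundary (G := T.toPGraph)) edgeChains
  have hup := finrank_edgeChains_le (G := T.toPGraph)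
  have hgenus := hT.2
  have hgw : 0 ≤ ∑ v ∈ T.vertexSet, (T.gw v : ℤ) :=
    sum_nonneg fun _ _ => Int.natCast_nonneg _
  rw [WGraph.genus] at hgenus
  constructor <;> omega

lemma gw_eq_zero (hT : IsTree T) {v : T.X} (hv : T.IsVertex v) : T.gw v = 0 := by
  have h := (sum_eq_zero_iff_of_nonneg fun _ _ => Int.natCast_nonneg _).mp
    hT.sum_gw_eq_zero_and_finrank_map_boundary_eq.1 v (mem_vertexSet.mpr hv)
  exact_mod_cast h

lemma eq_zero_of_boundary_eq_zero (hT : IsTree T) {t : T.X → ZMod 2}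
    (ht : t ∈ edgeChains (G := T.toPGraph)) (hbd : boundary t = 0) : t = 0 := by
  set f := (boundary (G := T.toPGraph)).domRestrict edgeChains
  have hker : finrank (ZMod 2) (LinearMap.ker f) = 0 := by
    have := f.finrank_range_add_finrank_ker
    rw [LinearMap.range_domRestrict, hT.sum_gw_eq_zero_and_finrank_map_boundary_eq.2] at this
    omega
  have hmem : (⟨t, ht⟩ : edgeChains (G := T.toPGraph)) ∈ LinearMap.ker f := hbd
  rw [Submodule.finrank_eq_zero.mp hker, Submodule.mem_bot] at hmem
  exact congrArg Subtype.val hmem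

lemma exists_isCycle_legSet_inter_eq (hT : IsTree T) {D : Finset T.X}
    (hD : ∀ p ∈ D, T.IsLeg p) (hEven : Even D.card) :
    ∃ C : Finset T.X, IsCycle T C ∧ T.legSet ∩ C = D := by
  obtain ⟨t, ht, hbd⟩ :=
    Submodule.mem_map.mp (hT.1.boundary_indicator_mem_map (fun p hp => (hD p hp).1) hEven)
  obtain ⟨E, hEt, hE⟩ := exists_finset_indicator_eq_of_mem_edgeChains ht
  have hDE : Disjoint D E := disjoint_left.mpr fun x hxD hxE => (hE x hxE).1.2 (hD x hxD).2
  have hlegs : T.legSet ∩ (D ∪ E) = D := by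
    ext x
    simp only [mem_inter, mem_union, mem_legSet]
    exact ⟨fun ⟨hleg, hx⟩ => hx.resolve_right fun hxE => (hE x hxE).1.2 hleg.2,
      fun hx => ⟨hD x hx, Or.inl hx⟩⟩
  refine ⟨(D ∪ E) ∪ (D ∪ E).image T.rt, isCycle_union_image_rt (fun _ => hT.gw_eq_zero)
    (fun x hx => ?_) (fun x hx => ?_) ?_, by rw [legSet_inter_union_image_rt, hlegs]⟩
  · rcases mem_union.mp hx with hx | hx
    exacts [(hD x hx).1, (hE x hx).1.1]
  · rcases mem_union.mp hx with hx | hx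
    · rw [(hD x hx).2]
      exact mem_union_left _ hx
    · exact mem_union_right _ (hE x hx).2
  · rw [coe_union, Set.indicator_union_of_disjoint (disjoint_coe.mpr hDE), ← Pi.add_def,
      map_add, hEt, hbd, ZModModule.add_self]

lemma eq_of_isCycle_of_legSet_inter_eq (hT : IsTree T) {C C' : Finset T.X} (hC : IsCycle T C)
    (hC' : IsCycle T C') (hlegs : T.legSet ∩ C = T.legSet ∩ C') : C = C' := by
  classical
  set t : T.X → ZMod 2 := (cfilter T.IsHalf C : Set T.X).indicator 1 +
    (cfilter T.IsHalf C' : Set T.X).indicator 1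
  have ht_apply : ∀ x, t x = (if x ∈ C ∧ T.IsHalf x then 1 else 0) +
      if x ∈ C' ∧ T.IsHalf x then 1 else 0 := fun x => by
    simp [t, Set.indicator_apply]
  have ht : t ∈ edgeChains := by
    refine fun x => ⟨?_, fun hx => ?_⟩
    · simp only [ht_apply, hC.1.inv_mem_iff, hC'.1.inv_mem_iff, isHalf_inv_iff]
    · rw [ht_apply, zmod_two_ite_add_ite_eq_zero_iff]
      by_cases hxh : T.IsHalf x
      · have hleg : T.IsLeg x := by_contra fun h => hx (hxh.isEdgeHalf_of_not_isLeg h)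
        have := congrArg (x ∈ ·) hlegs
        simp only [mem_inter, mem_legSet, hleg, true_and, eq_iff_iff] at this
        simp [this]
      · simp [hxh]
  have hbd : boundary t = 0 := by
    rw [map_add, boundary_indicator_cfilter_isHalf, boundary_indicator_cfilter_isHalf,
      hC.boundary_indicator_eq_zero, hC'.boundary_indicator_eq_zero, add_zero]
  have hhalf : ∀ x, T.IsHalf x → (x ∈ C ↔ x ∈ C') := fun x hx => by
    have := congrFun (hT.eq_zero_of_boundary_eq_zero ht hbd) x
    rwa [ht_apply, Pi.zero_apply, zmod_two_ite_add_ite_eq_zero_iff, and_iff_left hx,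
      and_iff_left hx] at this
  exact (hC.subset_of_forall_isHalf (fun _ => hT.gw_eq_zero) hC'.1
    fun x hx hxh => (hhalf x hxh).mp hx).antisymm
    (hC'.subset_of_forall_isHalf (fun _ => hT.gw_eq_zero) hC.1 fun x hx hxh => (hhalf x hxh).mpr hx)

end IsTree

/-- Let `T` be a tree and `D ⊆ L(T)` a set of legs of `T` with `#D`
even.  Then there exists exactly one cycle `C` in `T` whose set of legs is `D`. -/
theorem unique_cycle_with_given_legs
    (T : WGraph) (hT : IsTree T) (D : Finset T.X) (hD : ∀ p ∈ D, T.toPGraph.IsLeg p)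
    (hEven : Even D.card) :
    ∃! C : Finset T.X, IsCycle T C ∧ T.toPGraph.legSet ∩ C = D := by
  obtain ⟨C, hC, hCD⟩ := hT.exists_isCycle_legSet_inter_eq hD hEven
  exact ⟨C, ⟨hC, hCD⟩, fun C' ⟨hC', hC'D⟩ =>
    hT.eq_of_isCycle_of_legSet_inter_eq hC' hC (hC'D.trans hCD.symm)⟩

end TropDR
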